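/- Let Λ be an n×n doubly stochastic matrix and 𝐅 = (F₁,…,Fₙ) an n-tuple of Borel probability measures on ℝ with finite first moments. The following are equivalent: (a) (Λ⊗𝐅)ᵢ ≺_cx Fᵢ for every i; (b) Fᵢ ≺_cx (Λ⊗𝐅)ᵢ for every i; (c) Λ⊗𝐅 = 𝐅 (componentwise equality of measures). -/

import Mathlib

open MeasureTheory
open scoped ENNReal BigOperators

noncomputable section

/-- The `f`-aggregation set: laws of `f (X₁,…,Xₙ)` over all couplings with marginals `F`. -/
def aggSetF (n : ℕ) (f : (Fin n → ℝ) → ℝ) (F : Fin n → Measure ℝ) : Set (Measure ℝ) :=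
  {H | ∃ μ : Measure (Fin n → ℝ), IsProbabilityMeasure μ ∧
    (∀ i, μ.map (fun x => x i) = F i) ∧ H = μ.map f}

/-- The aggregation set for sums. -/
def aggSet (n : ℕ) (F : Fin n → Measure ℝ) : Set (Measure ℝ) :=
  aggSetF n (fun x => ∑ i, x i) F

/-- A symmetric function on `ℝⁿ`. -/
def IsSymmetricFn (n : ℕ) (f : (Fin n → ℝ) → ℝ) : Prop :=
  ∀ (π : Equiv.Perm (Fin n)) (x : Fin n → ℝ), f (x ∘ π) = f x

/-- Left-continuous quantile function of a measure on ℝ. -/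
def quantile (F : Measure ℝ) (p : ℝ) : ℝ :=
  sInf {x : ℝ | p ≤ (F (Set.Iic x)).toReal}

/-- The uniform probability measure on (0,1). -/
def uniform01 : Measure ℝ := volume.restrict (Set.Ioo (0 : ℝ) 1)

/-- Comonotonic sum F₁ ⊕ ⋯ ⊕ Fₙ : the law of ∑ Fᵢ⁻¹(U), U uniform on (0,1). -/
def comonoSum (n : ℕ) (F : Fin n → Measure ℝ) : Measure ℝ :=
  uniform01.map (fun u => ∑ i, quantile (F i) u)

/-- Convex order F ≺cx G. -/
def ConvexOrder (F G : Measure ℝ) : Prop :=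
  ∀ φ : ℝ → ℝ, ConvexOn ℝ Set.univ φ → Integrable φ F → Integrable φ G →
    ∫ x, φ x ∂F ≤ ∫ x, φ x ∂G

/-- Stochastic order F ≺st G, i.e. F((-∞,x]) ≥ G((-∞,x]) for all x. -/
def StOrder (F G : Measure ℝ) : Prop :=
  ∀ x : ℝ, G (Set.Iic x) ≤ F (Set.Iic x)

/-- Doubly stochastic matrix. -/
def DoublyStochastic {n : ℕ} (Λ : Matrix (Fin n) (Fin n) ℝ) : Prop :=
  (∀ i j, 0 ≤ Λ i j) ∧ (∀ i, ∑ j, Λ i j = 1) ∧ (∀ j, ∑ i, Λ i j = 1)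

/-- Distribution mixture Λ𝐅 : i-th component is ∑ⱼ Λᵢⱼ Fⱼ. -/
def distMix {n : ℕ} (Λ : Matrix (Fin n) (Fin n) ℝ) (F : Fin n → Measure ℝ) :
    Fin n → Measure ℝ :=
  fun i => ∑ j, ENNReal.ofReal (Λ i j) • F j

/-- Quantile mixture Λ⊗𝐅 : i-th component is the law of ∑ⱼ Λᵢⱼ Fⱼ⁻¹(U). -/
def quantileMix {n : ℕ} (Λ : Matrix (Fin n) (Fin n) ℝ) (F : Fin n → Measure ℝ) :
    Fin n → Measure ℝ :=
  fun i => uniform01.map (fun u => ∑ j, Λ i j * quantile (F j) u)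

/-- Worst-case value of a risk measure over the aggregation set, valued in EReal. -/
def worstCase (ρ : Measure ℝ → ℝ) (n : ℕ) (F : Fin n → Measure ℝ) : EReal :=
  sSup ((fun H => ((ρ H : ℝ) : EReal)) '' aggSet n F)

/-- Worst-case Value-at-Risk over the aggregation set, valued in EReal. -/
def worstVaR (p : ℝ) (n : ℕ) (F : Fin n → Measure ℝ) : EReal :=
  sSup ((fun G => ((quantile G p : ℝ) : EReal)) '' aggSet n F)

/-- The class M_D of distributions with a nonincreasing density on an interval support. -/
def MemMD (F : Measure ℝ) : Prop :=
  ∃ f : ℝ → ℝ, Measurable f ∧ (∀ x, 0 ≤ f x) ∧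
    F = volume.withDensity (fun x => ENNReal.ofReal (f x)) ∧
    ∃ s : Set ℝ, s.OrdConnected ∧ (∀ x, x ∉ s → f x = 0) ∧
      (∀ x ∈ s, ∀ y ∈ s, x ≤ y → f y ≤ f x)

/-- The class M_I of distributions with a nondecreasing density on an interval support. -/
def MemMI (F : Measure ℝ) : Prop :=
  ∃ f : ℝ → ℝ, Measurable f ∧ (∀ x, 0 ≤ f x) ∧
    F = volume.withDensity (fun x => ENNReal.ofReal (f x)) ∧
    ∃ s : Set ℝ, s.OrdConnected ∧ (∀ x, x ∉ s → f x = 0) ∧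
      (∀ x ∈ s, ∀ y ∈ s, x ≤ y → f x ≤ f y)

/-- Pareto(α, θ) distribution, via its Lebesgue density α θ^α x^{-(α+1)} on [θ, ∞). -/
def pareto (α θ : ℝ) : Measure ℝ :=
  volume.withDensity
    (fun x => if θ ≤ x then ENNReal.ofReal (α * θ ^ α / x ^ (α + 1)) else 0)

/-- A monotone risk measure (w.r.t. stochastic order, on probability measures). -/
def MonotoneRisk (ρ : Measure ℝ → ℝ) : Prop :=
  ∀ F G : Measure ℝ, IsProbabilityMeasure F → IsProbabilityMeasure G →
    StOrder F G → ρ F ≤ ρ G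

/-- A risk measure consistent with convex order (on finite-mean probability measures). -/
def CxConsistentRisk (ρ : Measure ℝ → ℝ) : Prop :=
  ∀ F G : Measure ℝ, IsProbabilityMeasure F → IsProbabilityMeasure G →
    Integrable id F → Integrable id G → ConvexOrder F G → ρ F ≤ ρ G

/-- Uniform distribution on [a,b]. -/
def unifOn (a b : ℝ) : Measure ℝ :=
  (ENNReal.ofReal (b - a))⁻¹ • volume.restrict (Set.Icc a b)

/-- Bernoulli distribution with parameter p, as a measure on ℝ. -/
def bern (p : ℝ) : Measure ℝ :=
  ENNReal.ofReal (1 - p) • Measure.dirac (0 : ℝ) + ENNReal.ofReal p • Measure.dirac (1 : ℝ)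

/-- The set C(𝐅) of finite-mean distributions dominated by the comonotonic sum in convex order. -/
def CSet (n : ℕ) (F : Fin n → Measure ℝ) : Set (Measure ℝ) :=
  {G | IsProbabilityMeasure G ∧ Integrable id G ∧ ConvexOrder G (comonoSum n F)}

/-!
Write `Qᵢ = ∑ⱼ Λᵢⱼ Fⱼ⁻¹`, so that `(Λ ⊗ 𝐅)ᵢ` is the law of `Qᵢ(U)`, and test convex order on the
stop-loss functions `x ↦ (x - t)⁺`. If `(Λ ⊗ 𝐅)ᵢ ≺cx Fᵢ`, taking `t = Fᵢ⁻¹(p)` and using that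
`Fᵢ⁻¹` is nondecreasing gives `∫ₚ¹ Qᵢ ≤ ∫ₚ¹ Fᵢ⁻¹` for every `p`. As the columns of `Λ` sum to one,
`∑ᵢ Qᵢ = ∑ᵢ Fᵢ⁻¹`, so all these inequalities are equalities, and equal upper tail integrals force
`Qᵢ = Fᵢ⁻¹` almost everywhere. If instead `Fᵢ ≺cx (Λ ⊗ 𝐅)ᵢ`, Jensen's inequality along the rows of
`Λ` bounds `∑ᵢ 𝔼(Qᵢ(U) - t)⁺` by `∑ᵢ 𝔼(Fᵢ⁻¹(U) - t)⁺`, so the stop-loss transforms agree and the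
first case applies.
-/

open Set Filter ProbabilityTheory

instance : IsProbabilityMeasure uniform01 :=
  ⟨by simp [uniform01, Real.volume_Ioo]⟩

lemma ae_mem_Ioo_uniform01 : ∀ᵐ u ∂uniform01, u ∈ Ioo (0 : ℝ) 1 :=
  ae_restrict_mem measurableSet_Ioo

section Quantile

variable (F : Measure ℝ) [IsProbabilityMeasure F]

lemma quantile_eq_sInf_cdf (p : ℝ) : quantile F p = sInf {x | p ≤ cdf F x} := by
  simp only [quantile, cdf_eq_real, measureReal_def]

lemma quantile_le_iff {p : ℝ} (hp : p ∈ Ioo 0 1) (x : ℝ) :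
    quantile F p ≤ x ↔ p ≤ cdf F x := by
  set S := {x | p ≤ cdf F x}
  have hS : S.Nonempty := ((tendsto_cdf_atTop F).eventually (eventually_ge_nhds hp.2)).exists
  obtain ⟨x₀, hx₀⟩ := ((tendsto_cdf_atBot F).eventually (eventually_lt_nhds hp.1)).exists
  have hS_bdd : BddBelow S := by
    refine ⟨x₀, fun x hx => not_lt.1 fun hlt => ?_⟩
    exact (hx₀.trans_le' (monotone_cdf F hlt.le)).not_ge hx
  rw [quantile_eq_sInf_cdf]
  refine ⟨fun h => ?_, fun h => csInf_le hS_bdd h⟩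
  -- Right-continuity of the cdf shows that the infimum is attained.
  have hinf : p ≤ cdf F (sInf S) := by
    refine ge_of_tendsto ((cdf F).right_continuous _ |>.mono Ioi_subset_Ici_self) ?_
    filter_upwards [self_mem_nhdsWithin] with y hy
    obtain ⟨z, hzS, hzy⟩ := exists_lt_of_csInf_lt hS hy
    exact hzS.trans (monotone_cdf F hzy.le)
  exact hinf.trans (monotone_cdf F h)

lemma monotoneOn_quantile : MonotoneOn (quantile F) (Ioo 0 1) := fun _ ha _ hb hab =>
  (quantile_le_iff F ha _).2 (hab.trans ((quantile_le_iff F hb _).1 le_rfl))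

lemma aemeasurable_quantile : AEMeasurable (quantile F) uniform01 :=
  aemeasurable_restrict_of_monotoneOn measurableSet_Ioo (monotoneOn_quantile F)

lemma map_quantile_uniform01 : uniform01.map (quantile F) = F := by
  refine Measure.ext_of_Iic _ _ fun x => ?_
  rw [Measure.map_apply_of_aemeasurable (aemeasurable_quantile F) measurableSet_Iic, uniform01,
    Measure.restrict_apply' measurableSet_Ioo, ← ofReal_cdf]
  have hpre : quantile F ⁻¹' Iic x ∩ Ioo 0 1 = Iic (cdf F x) ∩ Ioo 0 1 := by
    ext u
    simp only [mem_inter_iff, mem_preimage, mem_Iic, and_congr_left_iff]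
    exact fun hu => quantile_le_iff F hu x
  -- `Iic c ∩ Ioo 0 1` lies between `Ioo 0 c` and `Ioc 0 c`, both of length `c`.
  rw [hpre]
  refine le_antisymm ?_ ?_
  · calc volume (Iic (cdf F x) ∩ Ioo 0 1) ≤ volume (Ioc 0 (cdf F x)) :=
          measure_mono fun u hu => ⟨hu.2.1, hu.1⟩
      _ = _ := by rw [Real.volume_Ioc, sub_zero]
  · calc ENNReal.ofReal (cdf F x) = volume (Ioo 0 (cdf F x)) := by rw [Real.volume_Ioo, sub_zero]
      _ ≤ volume (Iic (cdf F x) ∩ Ioo 0 1) :=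
          measure_mono fun u hu => ⟨hu.2.le, hu.1, hu.2.trans_le (cdf_le_one F x)⟩

lemma integrable_quantile (hF : Integrable id F) : Integrable (quantile F) uniform01 := by
  rw [← map_quantile_uniform01 F] at hF
  exact (integrable_map_measure aestronglyMeasurable_id (aemeasurable_quantile F)).1 hF

end Quantile

lemma ae_eq_of_forall_setIntegral_Ioi_eq {μ : Measure ℝ} {f g : ℝ → ℝ} (hf : Integrable f μ)
    (hg : Integrable g μ) (h : ∀ a, ∫ x in Ioi a, f x ∂μ = ∫ x in Ioi a, g x ∂μ) :
    f =ᵐ[μ] g := by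
  have htotal : ∫ x, f x ∂μ = ∫ x, g x ∂μ :=
    tendsto_nhds_unique ((aecover_Ioi tendsto_id).integral_tendsto_of_countably_generated hf)
      (((aecover_Ioi tendsto_id).integral_tendsto_of_countably_generated hg).congr
        fun a => (h a).symm)
  -- The sets on which the integrals agree form a Dynkin system containing the π-system
  -- `{univ} ∪ {Ioi a}`, which generates the Borel σ-algebra.
  have hsets : ∀ s, MeasurableSet s → ∫ x in s, f x ∂μ = ∫ x in s, g x ∂μ := by
    intro s hs
    induction s, hs using MeasurableSpace.induction_on_inter
        (borel_eq_generateFrom_Ioi ℝ ▸ (MeasurableSpace.generateFrom_insert_univ _).symm)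
        isPiSystem_Ioi.insert_univ with
    | empty => simp
    | basic t ht =>
      rcases ht with rfl | ⟨a, rfl⟩
      · simpa using htotal
      · simpa using h a
    | compl t ht iht =>
      rw [← integral_add_compl ht hf, ← integral_add_compl ht hg, iht] at htotal
      exact add_left_cancel htotal
    | iUnion s hdisj hs ihs =>
      rw [integral_iUnion hs hdisj hf.integrableOn, integral_iUnion hs hdisj hg.integrableOn]
      exact tsum_congr ihs
  exact hf.ae_eq_of_forall_setIntegral_eq f g hg fun s hs _ => hsets s hs

lemma ae_eq_uniform01_of_forall_setIntegral_Ioi_eq {f g : ℝ → ℝ} (hf : Integrable f uniform01)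
    (hg : Integrable g uniform01)
    (h : ∀ p ∈ Ioo (0 : ℝ) 1, ∫ u in Ioi p, f u ∂uniform01 = ∫ u in Ioi p, g u ∂uniform01) :
    f =ᵐ[uniform01] g := by
  have restrict_Ioi : ∀ a, uniform01.restrict (Ioi a) = volume.restrict (Ioi a ∩ Ioo 0 1) :=
    fun a => Measure.restrict_restrict measurableSet_Ioi
  have h0 : ∫ u in Ioi 0, f u ∂uniform01 = ∫ u in Ioi 0, g u ∂uniform01 := by
    refine tendsto_nhds_unique
      ((hf.integrableOn.continuousWithinAt_Ici_primitive_Ioi).mono Ioi_subset_Ici_self)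
      (((hg.integrableOn.continuousWithinAt_Ici_primitive_Ioi).mono Ioi_subset_Ici_self).congr'
        ?_)
    filter_upwards [Ioo_mem_nhdsGT zero_lt_one] with p hp using (h p hp).symm
  refine ae_eq_of_forall_setIntegral_Ioi_eq hf hg fun a => ?_
  rcases le_or_gt a 0 with ha | ha
  · have : Ioi a ∩ Ioo 0 1 = Ioi 0 ∩ Ioo (0 : ℝ) 1 := by
      rw [inter_eq_right.2 Ioo_subset_Ioi_self,
        inter_eq_right.2 (Ioo_subset_Ioi_self.trans (Ioi_subset_Ioi ha))]
    rwa [restrict_Ioi, this, ← restrict_Ioi]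
  rcases lt_or_ge a 1 with ha' | ha'
  · exact h a ⟨ha, ha'⟩
  · have : Ioi a ∩ Ioo 0 1 = (∅ : Set ℝ) :=
      eq_empty_of_forall_notMem fun u hu => (hu.2.2.trans_le ha').not_gt hu.1
    simp [restrict_Ioi, this]

def stopLoss (G : Measure ℝ) (t : ℝ) : ℝ := ∫ x, max (x - t) 0 ∂G

lemma convexOn_max_sub_zero (t : ℝ) : ConvexOn ℝ univ fun x : ℝ => max (x - t) 0 :=
  ((convexOn_id convex_univ).sub (concaveOn_const t convex_univ)).sup
    (convexOn_const 0 convex_univ)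

lemma stopLoss_map {μ : Measure ℝ} {g : ℝ → ℝ} (hg : AEMeasurable g μ) (t : ℝ) :
    stopLoss (μ.map g) t = ∫ u, max (g u - t) 0 ∂μ :=
  integral_map hg (by fun_prop : Continuous fun x : ℝ => max (x - t) 0).aestronglyMeasurable

lemma stopLoss_eq_integral_quantile (F : Measure ℝ) [IsProbabilityMeasure F] (t : ℝ) :
    stopLoss F t = ∫ u, max (quantile F u - t) 0 ∂uniform01 := by
  rw [← stopLoss_map (aemeasurable_quantile F), map_quantile_uniform01]

lemma ConvexOrder.stopLoss_le {G H : Measure ℝ} [IsFiniteMeasure G] [IsFiniteMeasure H]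
    (h : ConvexOrder G H) (hG : Integrable id G) (hH : Integrable id H) (t : ℝ) :
    stopLoss G t ≤ stopLoss H t :=
  h _ (convexOn_max_sub_zero t) (hG.sub (integrable_const t)).pos_part
    (hH.sub (integrable_const t)).pos_part

lemma ConvexOrder.refl (G : Measure ℝ) : ConvexOrder G G := fun _ _ _ _ => le_rfl

lemma setIntegral_Ioi_le_of_stopLoss_le {μ : Measure ℝ} [IsFiniteMeasure μ] {s : Set ℝ}
    {g h : ℝ → ℝ} (hg : Integrable g μ) (hh : Integrable h μ) (h_mono : MonotoneOn h s)
    (hs : ∀ᵐ u ∂μ, u ∈ s) (hgh : ∀ t, stopLoss (μ.map g) t ≤ stopLoss (μ.map h) t)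
    {p : ℝ} (hp : p ∈ s) :
    ∫ u in Ioi p, g u ∂μ ≤ ∫ u in Ioi p, h u ∂μ := by
  set t := h p
  have hg' : Integrable (fun u => g u - t) μ := hg.sub (integrable_const t)
  -- Since `h` is nondecreasing, `(h - h p)⁺` is `h - h p` above `p` and `0` below.
  have h_posPart : (fun u => max (h u - t) 0) =ᵐ[μ] (Ioi p).indicator fun u => h u - t := by
    filter_upwards [hs] with u hu
    by_cases hup : p < u
    · simpa [hup] using h_mono hp hu hup.le
    · simpa [hup] using h_mono hu hp (not_lt.1 hup)
  have key : ∫ u in Ioi p, (g u - t) ∂μ ≤ ∫ u in Ioi p, (h u - t) ∂μ :=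
    calc ∫ u in Ioi p, (g u - t) ∂μ ≤ ∫ u in Ioi p, max (g u - t) 0 ∂μ :=
          integral_mono hg'.integrableOn hg'.pos_part.integrableOn fun u => le_max_left _ _
      _ ≤ ∫ u, max (g u - t) 0 ∂μ :=
          setIntegral_le_integral hg'.pos_part (ae_of_all _ fun u => le_max_right _ _)
      _ ≤ ∫ u, max (h u - t) 0 ∂μ := by
          simpa only [stopLoss_map hg.aemeasurable, stopLoss_map hh.aemeasurable] using hgh t
      _ = ∫ u in Ioi p, (h u - t) ∂μ := by
          rw [integral_congr_ae h_posPart, integral_indicator measurableSet_Ioi]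
  rwa [integral_sub hg.integrableOn (integrable_const t).integrableOn,
    integral_sub hh.integrableOn (integrable_const t).integrableOn, sub_le_sub_iff_right] at key

lemma DoublyStochastic.sum_sum_mul {n : ℕ} {Λ : Matrix (Fin n) (Fin n) ℝ}
    (hΛ : DoublyStochastic Λ) (a : Fin n → ℝ) : ∑ i, ∑ j, Λ i j * a j = ∑ j, a j := by
  rw [Finset.sum_comm]
  simp only [← Finset.sum_mul, hΛ.2.2, one_mul]

section QuantileMix

variable {n : ℕ} {Λ : Matrix (Fin n) (Fin n) ℝ} {F : Fin n → Measure ℝ}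

def mixQuantile (Λ : Matrix (Fin n) (Fin n) ℝ) (F : Fin n → Measure ℝ) (i : Fin n) (u : ℝ) :
    ℝ :=
  ∑ j, Λ i j * quantile (F j) u

lemma quantileMix_eq_map (i : Fin n) : quantileMix Λ F i = uniform01.map (mixQuantile Λ F i) :=
  rfl

variable (hF : ∀ i, IsProbabilityMeasure (F i)) (hFint : ∀ i, Integrable id (F i))
include hF

lemma aemeasurable_mixQuantile (i : Fin n) : AEMeasurable (mixQuantile Λ F i) uniform01 :=
  Finset.aemeasurable_fun_sum _ fun j _ => by
    have := hF j
    exact (aemeasurable_quantile (F j)).const_mul _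

lemma isProbabilityMeasure_quantileMix (i : Fin n) : IsProbabilityMeasure (quantileMix Λ F i) :=
  Measure.isProbabilityMeasure_map (aemeasurable_mixQuantile hF i)

include hFint

lemma integrable_mixQuantile (i : Fin n) : Integrable (mixQuantile Λ F i) uniform01 :=
  integrable_finsetSum _ fun j _ => by
    have := hF j
    exact (integrable_quantile (F j) (hFint j)).const_mul _

lemma integrable_id_quantileMix (i : Fin n) : Integrable id (quantileMix Λ F i) :=
  (integrable_map_measure aestronglyMeasurable_id (aemeasurable_mixQuantile hF i)).2
    (integrable_mixQuantile hF hFint i)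

lemma sum_stopLoss_quantileMix_le (hΛ : DoublyStochastic Λ) (t : ℝ) :
    ∑ i, stopLoss (quantileMix Λ F i) t ≤ ∑ i, stopLoss (F i) t := by
  have hint : ∀ j, Integrable (fun u => max (quantile (F j) u - t) 0) uniform01 := fun j => by
    have := hF j
    exact ((integrable_quantile (F j) (hFint j)).sub (integrable_const t)).pos_part
  have jensen : ∀ i u, max (mixQuantile Λ F i u - t) 0
      ≤ ∑ j, Λ i j * max (quantile (F j) u - t) 0 := fun i u => by
    simpa only [mixQuantile, smul_eq_mul] using
      (convexOn_max_sub_zero t).map_sum_le (fun j _ => hΛ.1 i j) (hΛ.2.1 i) fun _ _ => mem_univ _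
  calc ∑ i, stopLoss (quantileMix Λ F i) t
      = ∑ i, ∫ u, max (mixQuantile Λ F i u - t) 0 ∂uniform01 := by
        simp only [quantileMix_eq_map, stopLoss_map (aemeasurable_mixQuantile hF _)]
    _ ≤ ∑ i, ∑ j, Λ i j * ∫ u, max (quantile (F j) u - t) 0 ∂uniform01 := by
        refine Finset.sum_le_sum fun i _ => ?_
        simp only [← integral_const_mul]
        rw [← integral_finsetSum _ fun j _ => (hint j).const_mul _]
        exact integral_mono ((integrable_mixQuantile hF hFint i).sub (integrable_const t)).pos_part
          (integrable_finsetSum _ fun j _ => (hint j).const_mul _) (jensen i)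
    _ = ∑ i, stopLoss (F i) t := by
        rw [hΛ.sum_sum_mul]
        exact Finset.sum_congr rfl fun j _ => by
          have := hF j
          exact (stopLoss_eq_integral_quantile (F j) t).symm

lemma quantileMix_eq_of_stopLoss_le (hΛ : DoublyStochastic Λ)
    (hS : ∀ i t, stopLoss (quantileMix Λ F i) t ≤ stopLoss (F i) t) (i : Fin n) :
    quantileMix Λ F i = F i := by
  have tail_le : ∀ p ∈ Ioo (0 : ℝ) 1, ∀ i, ∫ u in Ioi p, mixQuantile Λ F i u ∂uniform01
      ≤ ∫ u in Ioi p, quantile (F i) u ∂uniform01 := fun p hp i => by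
    have := hF i
    refine setIntegral_Ioi_le_of_stopLoss_le (integrable_mixQuantile hF hFint i)
      (integrable_quantile (F i) (hFint i)) (monotoneOn_quantile (F i)) ae_mem_Ioo_uniform01
      (fun t => ?_) hp
    rw [map_quantile_uniform01]
    exact hS i t
  have tail_sum : ∀ p, ∑ i, ∫ u in Ioi p, mixQuantile Λ F i u ∂uniform01
      = ∑ i, ∫ u in Ioi p, quantile (F i) u ∂uniform01 := fun p => by
    rw [← integral_finsetSum _ fun i _ => (integrable_mixQuantile hF hFint i).integrableOn,
      ← integral_finsetSum _ fun i _ => by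
        have := hF i
        exact (integrable_quantile (F i) (hFint i)).integrableOn]
    simp only [mixQuantile, hΛ.sum_sum_mul]
  have := hF i
  have hae : mixQuantile Λ F i =ᵐ[uniform01] quantile (F i) :=
    ae_eq_uniform01_of_forall_setIntegral_Ioi_eq (integrable_mixQuantile hF hFint i)
      (integrable_quantile (F i) (hFint i)) fun p hp =>
      (Finset.sum_eq_sum_iff_of_le fun i _ => tail_le p hp i).1 (tail_sum p) i (Finset.mem_univ i)
  rw [quantileMix_eq_map, Measure.map_congr hae, map_quantile_uniform01]

end QuantileMix

/-- Proposition 4.2(iii): convex-order comparisons with a quantile mixture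
    force the mixture to be trivial. -/
theorem stmt9 (n : ℕ) (Λ : Matrix (Fin n) (Fin n) ℝ) (hΛ : DoublyStochastic Λ)
    (F : Fin n → Measure ℝ) (hF : ∀ i, IsProbabilityMeasure (F i))
    (hFint : ∀ i, Integrable id (F i)) :
    ((∀ i, ConvexOrder (quantileMix Λ F i) (F i)) ↔ (∀ i, quantileMix Λ F i = F i)) ∧
      ((∀ i, ConvexOrder (F i) (quantileMix Λ F i)) ↔ (∀ i, quantileMix Λ F i = F i)) := by
  have hmix := isProbabilityMeasure_quantileMix (Λ := Λ) hF
  have hmix_int := integrable_id_quantileMix (Λ := Λ) hF hFint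
  refine ⟨⟨fun h => quantileMix_eq_of_stopLoss_le hF hFint hΛ fun i t => ?_,
      fun h i => by rw [h i]; exact .refl _⟩,
    ⟨fun h => quantileMix_eq_of_stopLoss_le hF hFint hΛ fun i t => ?_,
      fun h i => by rw [h i]; exact .refl _⟩⟩
  · have := hF i
    have := hmix i
    exact (h i).stopLoss_le (hmix_int i) (hFint i) t
  · have hle : ∀ i, stopLoss (F i) t ≤ stopLoss (quantileMix Λ F i) t := fun i => by
      have := hF i
      have := hmix i
      exact (h i).stopLoss_le (hFint i) (hmix_int i) t
    have hsum := le_antisymm (Finset.sum_le_sum fun i _ => hle i)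
      (sum_stopLoss_quantileMix_le hF hFint hΛ t)
    exact ((Finset.sum_eq_sum_iff_of_le fun i _ => hle i).1 hsum i (Finset.mem_univ i)).ge

end
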